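/- arXiv:2105.03452 — 4 statements merged into one kernel-verified Lean document; each statement's English description precedes it below -/
import Mathlib

section
/- Let θ be a real number with 1 ≤ θ ≤ 2 and let a, b be real numbers. Set m = minmod(θ·a, (a+b)/2, θ·b), where minmod(x₁,…,xₙ) equals max(x₁,…,xₙ) if xⱼ < 0 for all j, equals min(x₁,…,xₙ) if xⱼ > 0 for all j, and equals 0 otherwise. Then |m| ≤ 2·|a| and |m| ≤ 2·|b|; in particular |m| ≤ 2·min(|a|, |b|). -/
/-- minmod of a (nonempty) finite list of reals: the maximum if all entries are
negative, the minimum if all entries are positive, and zero otherwise. -/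
noncomputable def minmod (l : List ℝ) : ℝ :=
  if ∀ x ∈ l, x < 0 then l.foldr max l.headI
  else if ∀ x ∈ l, x > 0 then l.foldr min l.headI
  else 0

/-- For `1 ≤ θ ≤ 2`, the minmod slope `m = minmod (θ·a, (a+b)/2, θ·b)` satisfies
`|m| ≤ 2|a|`, `|m| ≤ 2|b|`, and hence `|m| ≤ 2·min(|a|,|b|)`. -/
theorem minmod_slope_TVD_bound (θ a b : ℝ) (hθ1 : 1 ≤ θ) (hθ2 : θ ≤ 2) :
    |minmod [θ * a, (a + b) / 2, θ * b]| ≤ 2 * |a| ∧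
    |minmod [θ * a, (a + b) / 2, θ * b]| ≤ 2 * |b| ∧
    |minmod [θ * a, (a + b) / 2, θ * b]| ≤ 2 * min |a| |b| := by
  have key : |minmod [θ * a, (a + b) / 2, θ * b]| ≤ 2 * |a| ∧
      |minmod [θ * a, (a + b) / 2, θ * b]| ≤ 2 * |b| := by
    unfold minmod
    simp only [List.mem_cons, List.foldr, List.headI, forall_eq_or_imp,
      forall_eq, false_or, or_false, IsEmpty.forall_iff, and_true]
    split_ifs with h1 h2
    · obtain ⟨ha, hc, hb⟩ := h1
      have ha' : a < 0 := by nlinarith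
      have hb' : b < 0 := by nlinarith
      constructor
      · rw [abs_of_neg (by simp [ha, hb, hc] : max (θ*a) (max ((a+b)/2) (max (θ*b) (θ*a))) < 0),
          abs_of_neg ha']
        have : θ * a ≤ max (θ*a) (max ((a+b)/2) (max (θ*b) (θ*a))) := le_max_left _ _
        nlinarith
      · rw [abs_of_neg (by simp [ha, hb, hc] : max (θ*a) (max ((a+b)/2) (max (θ*b) (θ*a))) < 0),
          abs_of_neg hb']
        have : θ * b ≤ max (θ*a) (max ((a+b)/2) (max (θ*b) (θ*a))) :=
          by apply le_max_of_le_right; apply le_max_of_le_right; exact le_max_left _ _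
        nlinarith
    · obtain ⟨ha, hc, hb⟩ := h2
      have ha' : 0 < a := by nlinarith
      have hb' : 0 < b := by nlinarith
      have hpos : 0 < min (θ*a) (min ((a+b)/2) (min (θ*b) (θ*a))) := by
        simp [ha, hb, hc]
      constructor
      · rw [abs_of_pos hpos, abs_of_pos ha']
        have : min (θ*a) (min ((a+b)/2) (min (θ*b) (θ*a))) ≤ θ * a := min_le_left _ _
        nlinarith
      · rw [abs_of_pos hpos, abs_of_pos hb']
        have : min (θ*a) (min ((a+b)/2) (min (θ*b) (θ*a))) ≤ θ * b :=
          le_trans (min_le_right _ _) (le_trans (min_le_right _ _) (min_le_left _ _))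
        nlinarith
    · simp [abs_nonneg]
  refine ⟨key.1, key.2, ?_⟩
  rw [mul_min_of_nonneg _ _ (by norm_num : (0:ℝ) ≤ 2)]
  exact le_min key.1 key.2
end

section
/- Let γ = 1.4. Define u_φ and p on (0,∞) as in the Gresho vortex: u_φ(r) = 5r on (0,0.2), 2 − 5r on [0.2,0.4), 0 on [0.4,∞); p(r) = 5 + (25/2)r² on (0,0.2), 9 + (25/2)r² − 20r + 4·ln(5r) on [0.2,0.4), 3 + 4·ln 2 on [0.4,∞). On the open set Ω = {(x,y) ∈ ℝ² : r := √(x²+y²) ∉ {0, 0.2, 0.4}} define the velocity field (u,w)(x,y) = (u_φ(r))·(−y/r, x/r), density ρ ≡ 1, pressure P(x,y) = p(r), and energy E(x,y) = ½·ρ·(u² + w²) + P/(γ−1). Then all fields are differentiable on Ω and the time-independent fields solve the two-dimensional Euler equations on Ω, i.e. for all (x,y) ∈ Ω: ∂ₓ(ρu) + ∂ᵧ(ρw) = 0, ∂ₓ(ρu² + P) + ∂ᵧ(ρuw) = 0, ∂ₓ(ρuw) + ∂ᵧ(ρw² + P) = 0, and ∂ₓ(u(E+P)) + ∂ᵧ(w(E+P))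 = 0. -/
/-- Azimuthal velocity profile of the Gresho vortex. -/
noncomputable def uφ (r : ℝ) : ℝ :=
  if r < 0.2 then 5 * r
  else if r < 0.4 then 2 - 5 * r
  else 0

/-- Radial pressure profile of the Gresho vortex. -/
noncomputable def pGresho (r : ℝ) : ℝ :=
  if r < 0.2 then 5 + (25 / 2) * r ^ 2
  else if r < 0.4 then 9 + (25 / 2) * r ^ 2 - 20 * r + 4 * Real.log (5 * r)
  else 3 + 4 * Real.log 2

/-- Radius `r = √(x² + y²)`. -/
noncomputable def rad (q : ℝ × ℝ) : ℝ := Real.sqrt (q.1 ^ 2 + q.2 ^ 2)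

/-- The open set on which the Gresho fields are smooth: radii away from
`0`, `0.2` and `0.4`. -/
def Ω : Set (ℝ × ℝ) := {q | rad q ≠ 0 ∧ rad q ≠ 0.2 ∧ rad q ≠ 0.4}

/-- Density `ρ ≡ 1`. -/
noncomputable def ρG (_ : ℝ × ℝ) : ℝ := 1

/-- Horizontal velocity component `u = uφ(r)·(−y/r)`. -/
noncomputable def uG (q : ℝ × ℝ) : ℝ := uφ (rad q) * (-q.2 / rad q)

/-- Vertical velocity component `w = uφ(r)·(x/r)`. -/
noncomputable def wG (q : ℝ × ℝ) : ℝ := uφ (rad q) * (q.1 / rad q)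

/-- Pressure field `P(x,y) = p(r)`. -/
noncomputable def PG (q : ℝ × ℝ) : ℝ := pGresho (rad q)

/-- Energy density `E = ½ρ(u²+w²) + P/(γ−1)` with `γ = 1.4`. -/
noncomputable def EG (q : ℝ × ℝ) : ℝ :=
  (1 / 2) * ρG q * (uG q ^ 2 + wG q ^ 2) + PG q / (1.4 - 1)

/-!
A field `v = V(r) (−y/r, x/r)` circling the origin is divergence free, and for a radial
`h(r)` the product `v h(r)` is again such a field, with profile `V h`. In the momentum
equations everything cancels except `(x, y) (p'(r) − V(r)²/r) / r`, which vanishes under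
cyclostrophic balance `p' = V² / r`. With `ρ ≡ 1` and `|v| = V(r)`, the energy flux is `v`
times the radial function `V²/2 + p/(γ−1) + p`. On each annulus of the Gresho vortex,
`uφ r = a + b r` and `pGresho r = c + b² r²/2 + 2ab r + a² log r`, a primitive of `uφ² / r`.
-/

open Filter Topology

section Radius

variable {x y : ℝ}

lemma rad_sq (q : ℝ × ℝ) : rad q ^ 2 = q.1 ^ 2 + q.2 ^ 2 :=
  Real.sq_sqrt (by positivity)

lemma differentiableAt_rad {q : ℝ × ℝ} (hq : rad q ≠ 0) : DifferentiableAt ℝ rad q := by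
  have hpos : q.1 ^ 2 + q.2 ^ 2 ≠ 0 := by rw [← rad_sq]; positivity
  exact (by fun_prop : DifferentiableAt ℝ (fun p : ℝ × ℝ => p.1 ^ 2 + p.2 ^ 2) q).sqrt hpos

lemma hasDerivAt_rad_fst (hr : rad (x, y) ≠ 0) :
    HasDerivAt (fun t => rad (t, y)) (x / rad (x, y)) x := by
  have hpos : x ^ 2 + y ^ 2 ≠ 0 := by simpa [rad_sq] using pow_ne_zero 2 hr
  convert ((hasDerivAt_pow 2 x).add_const (y ^ 2)).sqrt hpos using 1
  · rfl
  · simp only [rad, Nat.cast_ofNat]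
    field_simp
    norm_num

lemma hasDerivAt_rad_snd (hr : rad (x, y) ≠ 0) :
    HasDerivAt (fun t => rad (x, t)) (y / rad (x, y)) y := by
  have hpos : x ^ 2 + y ^ 2 ≠ 0 := by simpa [rad_sq] using pow_ne_zero 2 hr
  convert ((hasDerivAt_pow 2 y).const_add (x ^ 2)).sqrt hpos using 1
  · rfl
  · simp only [rad, Nat.cast_ofNat]
    field_simp
    norm_num

end Radius

section Profiles

variable {r : ℝ}

lemma eventually_gresho_profiles (h2 : r ≠ 0.2) (h4 : r ≠ 0.4) :
    ∃ a b c : ℝ, ∀ᶠ s in 𝓝 r, uφ s = a + b * s ∧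
      pGresho s = c + b ^ 2 / 2 * s ^ 2 + 2 * a * b * s + a ^ 2 * Real.log s := by
  rcases h2.lt_or_gt with h2 | h2
  · refine ⟨0, 5, 5, ?_⟩
    filter_upwards [Iio_mem_nhds h2] with s hs
    simp only [uφ, pGresho, if_pos (show s < 0.2 from hs)]
    constructor <;> ring
  rcases h4.lt_or_gt with h4 | h4
  · refine ⟨2, -5, 9 + 4 * Real.log 5, ?_⟩
    filter_upwards [Ioo_mem_nhds h2 h4] with s ⟨hs2, hs4⟩
    have hs : 0 < s := by linarith
    simp only [uφ, pGresho, if_neg hs2.not_gt, if_pos hs4,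
      Real.log_mul (show (5 : ℝ) ≠ 0 by norm_num) hs.ne']
    constructor <;> ring
  · refine ⟨0, 0, 3 + 4 * Real.log 2, ?_⟩
    filter_upwards [Ioi_mem_nhds h4] with s hs
    have hs2 : ¬ s < 0.2 := by norm_num at hs ⊢; linarith
    simp only [uφ, pGresho, if_neg hs2, if_neg (show ¬ s < 0.4 from hs.le.not_gt)]
    constructor <;> ring

lemma differentiableAt_uφ (h2 : r ≠ 0.2) (h4 : r ≠ 0.4) : DifferentiableAt ℝ uφ r := by
  obtain ⟨a, b, c, h⟩ := eventually_gresho_profiles h2 h4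
  exact (by fun_prop : DifferentiableAt ℝ (fun s => a + b * s) r).congr_of_eventuallyEq
    (h.mono fun _ hs => hs.1)

lemma hasDerivAt_pGresho (hr : r ≠ 0) (h2 : r ≠ 0.2) (h4 : r ≠ 0.4) :
    HasDerivAt pGresho (uφ r ^ 2 / r) r := by
  obtain ⟨a, b, c, h⟩ := eventually_gresho_profiles h2 h4
  have hmodel := ((((hasDerivAt_pow 2 r).const_mul (b ^ 2 / 2)).const_add c).add
    ((hasDerivAt_id r).const_mul (2 * a * b))).add ((Real.hasDerivAt_log hr).const_mul (a ^ 2))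
  refine (hmodel.congr_of_eventuallyEq (h.mono fun _ hs => hs.2)).congr_deriv ?_
  rw [h.self_of_nhds.1]
  field_simp
  ring

end Profiles

noncomputable def swirlU (V : ℝ → ℝ) (q : ℝ × ℝ) : ℝ := V (rad q) * (-q.2 / rad q)

noncomputable def swirlW (V : ℝ → ℝ) (q : ℝ × ℝ) : ℝ := V (rad q) * (q.1 / rad q)

section Swirl

variable {V h p : ℝ → ℝ} {x y : ℝ}

lemma HasDerivAt.comp_rad_fst {h' : ℝ} (hh : HasDerivAt h h' (rad (x, y)))
    (hr : rad (x, y) ≠ 0) :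
    HasDerivAt (fun t => h (rad (t, y))) (h' * (x / rad (x, y))) x :=
  hh.comp x (hasDerivAt_rad_fst hr)

lemma HasDerivAt.comp_rad_snd {h' : ℝ} (hh : HasDerivAt h h' (rad (x, y)))
    (hr : rad (x, y) ≠ 0) :
    HasDerivAt (fun t => h (rad (x, t))) (h' * (y / rad (x, y))) y :=
  hh.comp y (hasDerivAt_rad_snd hr)

lemma swirlU_sq_add_swirlW_sq (hV : V 0 = 0) (q : ℝ × ℝ) :
    swirlU V q ^ 2 + swirlW V q ^ 2 = V (rad q) ^ 2 := by
  -- at `rad q = 0` the left side is `0` (division by zero), hence `V 0 = 0`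
  by_cases hr : rad q = 0
  · simp [swirlU, swirlW, hr, hV]
  · simp only [swirlU, swirlW]
    field_simp
    linear_combination (-1) * V (rad q) ^ 2 * rad_sq q

lemma differentiableAt_swirlU {q : ℝ × ℝ} (hV : DifferentiableAt ℝ V (rad q))
    (hr : rad q ≠ 0) : DifferentiableAt ℝ (swirlU V) q := by
  have := differentiableAt_rad hr
  unfold swirlU
  fun_prop (disch := assumption)

lemma differentiableAt_swirlW {q : ℝ × ℝ} (hV : DifferentiableAt ℝ V (rad q))
    (hr : rad q ≠ 0) : DifferentiableAt ℝ (swirlW V) q := by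
  have := differentiableAt_rad hr
  unfold swirlW
  fun_prop (disch := assumption)

lemma swirl_div (hV : DifferentiableAt ℝ V (rad (x, y))) (hr : rad (x, y) ≠ 0) :
    deriv (fun t => swirlU V (t, y)) x + deriv (fun t => swirlW V (x, t)) y = 0 := by
  have hU : HasDerivAt (fun t => swirlU V (t, y)) _ x := (hV.hasDerivAt.comp_rad_fst hr).mul
    ((hasDerivAt_const x (-y)).div (hasDerivAt_rad_fst hr) hr)
  have hW : HasDerivAt (fun t => swirlW V (x, t)) _ y := (hV.hasDerivAt.comp_rad_snd hr).mul
    ((hasDerivAt_const y x).div (hasDerivAt_rad_snd hr) hr)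
  rw [hU.deriv, hW.deriv]
  field_simp
  ring

lemma swirl_transport (hV : DifferentiableAt ℝ V (rad (x, y)))
    (hh : DifferentiableAt ℝ h (rad (x, y))) (hr : rad (x, y) ≠ 0) :
    deriv (fun t => swirlU V (t, y) * h (rad (t, y))) x +
      deriv (fun t => swirlW V (x, t) * h (rad (x, t))) y = 0 := by
  have hU (q : ℝ × ℝ) : swirlU V q * h (rad q) = swirlU (fun s => V s * h s) q := by
    simp only [swirlU]; ring
  have hW (q : ℝ × ℝ) : swirlW V q * h (rad q) = swirlW (fun s => V s * h s) q := by
    simp only [swirlW]; ring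
  simp only [hU, hW]
  exact swirl_div (hV.mul hh) hr

lemma swirl_momentum_fst (hV : DifferentiableAt ℝ V (rad (x, y)))
    (hp : HasDerivAt p (V (rad (x, y)) ^ 2 / rad (x, y)) (rad (x, y))) (hr : rad (x, y) ≠ 0) :
    deriv (fun t => swirlU V (t, y) ^ 2 + p (rad (t, y))) x +
      deriv (fun t => swirlU V (x, t) * swirlW V (x, t)) y = 0 := by
  have hUx : HasDerivAt (fun t => swirlU V (t, y)) _ x := (hV.hasDerivAt.comp_rad_fst hr).mul
    ((hasDerivAt_const x (-y)).div (hasDerivAt_rad_fst hr) hr)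
  have hUy : HasDerivAt (fun t => swirlU V (x, t)) _ y := (hV.hasDerivAt.comp_rad_snd hr).mul
    ((hasDerivAt_id y).neg.div (hasDerivAt_rad_snd hr) hr)
  have hWy : HasDerivAt (fun t => swirlW V (x, t)) _ y := (hV.hasDerivAt.comp_rad_snd hr).mul
    ((hasDerivAt_const y x).div (hasDerivAt_rad_snd hr) hr)
  have hx : HasDerivAt (fun t => swirlU V (t, y) ^ 2 + p (rad (t, y))) _ x :=
    (hUx.pow 2).add (hp.comp_rad_fst hr)
  have hy : HasDerivAt (fun t => swirlU V (x, t) * swirlW V (x, t)) _ y := hUy.mul hWy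
  rw [hx.deriv, hy.deriv]
  simp only [swirlU, swirlW, Pi.neg_apply, id, Nat.cast_ofNat, Nat.add_one_sub_one, pow_one]
  field_simp
  ring

lemma swirl_momentum_snd (hV : DifferentiableAt ℝ V (rad (x, y)))
    (hp : HasDerivAt p (V (rad (x, y)) ^ 2 / rad (x, y)) (rad (x, y))) (hr : rad (x, y) ≠ 0) :
    deriv (fun t => swirlU V (t, y) * swirlW V (t, y)) x +
      deriv (fun t => swirlW V (x, t) ^ 2 + p (rad (x, t))) y = 0 := by
  have hUx : HasDerivAt (fun t => swirlU V (t, y)) _ x := (hV.hasDerivAt.comp_rad_fst hr).mul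
    ((hasDerivAt_const x (-y)).div (hasDerivAt_rad_fst hr) hr)
  have hWx : HasDerivAt (fun t => swirlW V (t, y)) _ x := (hV.hasDerivAt.comp_rad_fst hr).mul
    ((hasDerivAt_id x).div (hasDerivAt_rad_fst hr) hr)
  have hWy : HasDerivAt (fun t => swirlW V (x, t)) _ y := (hV.hasDerivAt.comp_rad_snd hr).mul
    ((hasDerivAt_const y x).div (hasDerivAt_rad_snd hr) hr)
  have hx : HasDerivAt (fun t => swirlU V (t, y) * swirlW V (t, y)) _ x := hUx.mul hWx
  have hy : HasDerivAt (fun t => swirlW V (x, t) ^ 2 + p (rad (x, t))) _ y :=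
    (hWy.pow 2).add (hp.comp_rad_snd hr)
  rw [hx.deriv, hy.deriv]
  simp only [swirlU, swirlW, id, Nat.cast_ofNat, Nat.add_one_sub_one, pow_one]
  field_simp
  ring

end Swirl

lemma uφ_zero : uφ 0 = 0 := by norm_num [uφ]

lemma EG_eq (q : ℝ × ℝ) : EG q = uφ (rad q) ^ 2 / 2 + pGresho (rad q) / (1.4 - 1) := by
  have hspeed : uG q ^ 2 + wG q ^ 2 = uφ (rad q) ^ 2 := swirlU_sq_add_swirlW_sq uφ_zero q
  simp only [EG, ρG, PG, hspeed]
  ring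

/-- The Gresho vortex is a stationary solution of the two-dimensional Euler
equations: on `Ω` all fields are differentiable and the spatial divergence of the
Euler fluxes (mass, both momentum components, and energy) vanishes. -/
theorem gresho_stationary_euler :
    DifferentiableOn ℝ ρG Ω ∧
    DifferentiableOn ℝ uG Ω ∧
    DifferentiableOn ℝ wG Ω ∧
    DifferentiableOn ℝ PG Ω ∧
    DifferentiableOn ℝ EG Ω ∧
    (∀ q ∈ Ω,
      deriv (fun x => ρG (x, q.2) * uG (x, q.2)) q.1 +
          deriv (fun y => ρG (q.1, y) * wG (q.1, y)) q.2 = 0 ∧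
      deriv (fun x => ρG (x, q.2) * uG (x, q.2) ^ 2 + PG (x, q.2)) q.1 +
          deriv (fun y => ρG (q.1, y) * uG (q.1, y) * wG (q.1, y)) q.2 = 0 ∧
      deriv (fun x => ρG (x, q.2) * uG (x, q.2) * wG (x, q.2)) q.1 +
          deriv (fun y => ρG (q.1, y) * wG (q.1, y) ^ 2 + PG (q.1, y)) q.2 = 0 ∧
      deriv (fun x => uG (x, q.2) * (EG (x, q.2) + PG (x, q.2))) q.1 +
          deriv (fun y => wG (q.1, y) * (EG (q.1, y) + PG (q.1, y))) q.2 = 0) := by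
  have hΩ : ∀ q ∈ Ω, rad q ≠ 0 ∧ DifferentiableAt ℝ uφ (rad q) ∧
      HasDerivAt pGresho (uφ (rad q) ^ 2 / rad q) (rad q) := by
    rintro q ⟨h0, h2, h4⟩
    exact ⟨h0, differentiableAt_uφ h2 h4, hasDerivAt_pGresho h0 h2 h4⟩
  refine ⟨differentiableOn_const 1, fun q hq => ?_, fun q hq => ?_, fun q hq => ?_,
    fun q hq => ?_, fun ⟨x, y⟩ hq => ?_⟩ <;> obtain ⟨hr, hu, hp⟩ := hΩ _ hq
  · exact (differentiableAt_swirlU hu hr).differentiableWithinAt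
  · exact (differentiableAt_swirlW hu hr).differentiableWithinAt
  · exact (hp.differentiableAt.comp q (differentiableAt_rad hr)).differentiableWithinAt
  · rw [show EG = _ from funext EG_eq]
    exact ((((hu.pow 2).div_const 2).add (hp.differentiableAt.div_const _)).comp q
      (differentiableAt_rad hr)).differentiableWithinAt
  · simp only [ρG, one_mul, EG_eq]
    exact ⟨swirl_div hu hr, swirl_momentum_fst hu hp hr, swirl_momentum_snd hu hp hr,
      swirl_transport (h := fun r => uφ r ^ 2 / 2 + pGresho r / (1.4 - 1) + pGresho r) hu
        ((((hu.pow 2).div_const 2).add (hp.differentiableAt.div_const _)).add hp.differentiableAt)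
        hr⟩
end

section
/- Semi-discrete Harten lemma (periodic grid). Let N ≥ 1 and let v : ℝ → (ZMod N → ℝ) be differentiable in t, and let C, D : ℝ → (ZMod N → ℝ) be continuous with C_j(t) ≥ 0 and D_j(t) ≥ 0 for all j and t. Suppose v satisfies the incremental-form ODE system d(v_j)/dt = C_j(t)·(v_{j+1} − v_j) − D_{j−1}(t)·(v_j − v_{j−1}) for every j ∈ ZMod N and all t. Then the total variation TV(v(t)) = Σ_{j ∈ ZMod N} |v_{j+1}(t) − v_j(t)| is a nonincreasing function of t. -/
/-!
The differences `w j = v (j + 1) - v j` solve a linear system `w' = L(t) w` whose matrix has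
nonnegative off-diagonal entries and vanishing column sums. At every time the right derivative
of `∑ |w j|` is `σ ⬝ᵥ L w` for a subgradient `σ` of the `ℓ¹` norm at `w` (`|σ j| ≤ 1`,
`σ j * w j = |w j|`; where `w j = 0` take the sign of `w j'`), and
`σ ⬝ᵥ L w = ∑ⱼ (∑ᵢ σ i * L i j) * w j ≤ ∑ⱼ (∑ᵢ L i j) * |w j| ≤ 0`.
A continuous function with nonpositive right derivative everywhere is antitone.
-/

open Set Asymptotics Matrix

theorem HasDerivAt.hasDerivWithinAt_abs_Ici_of_eq_zero {f : ℝ → ℝ} {f' t : ℝ}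
    (hf : HasDerivAt f f' t) (h₀ : f t = 0) :
    HasDerivWithinAt (fun s => |f s|) |f'| (Ici t) t := by
  rw [hasDerivWithinAt_iff_isLittleO]
  refine IsBigO.trans_isLittleO (IsBigO.of_bound 1 ?_) hf.hasDerivWithinAt.isLittleO
  filter_upwards [self_mem_nhdsWithin] with s (hs : t ≤ s)
  simp only [h₀, abs_zero, sub_zero, smul_eq_mul, Real.norm_eq_abs, one_mul]
  calc |(|f s| - (s - t) * |f'|)| = |(|f s| - |(s - t) * f'|)| := by
        rw [abs_mul, abs_of_nonneg (sub_nonneg.2 hs)]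
    _ ≤ |f s - (s - t) * f'| := abs_abs_sub_abs_le_abs_sub _ _

theorem abs_sign_le_one (x : ℝ) : |(SignType.sign x : ℝ)| ≤ 1 := by
  rcases SignType.sign x with _ | _ | _ <;> simp

theorem HasDerivAt.exists_hasDerivWithinAt_abs_Ici {f : ℝ → ℝ} {f' t : ℝ}
    (hf : HasDerivAt f f' t) :
    ∃ σ : ℝ, |σ| ≤ 1 ∧ σ * f t = |f t| ∧
      HasDerivWithinAt (fun s => |f s|) (σ * f') (Ici t) t := by
  by_cases h₀ : f t = 0
  · refine ⟨SignType.sign f', abs_sign_le_one f', by simp [h₀], ?_⟩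
    rw [sign_mul_self]
    exact hf.hasDerivWithinAt_abs_Ici_of_eq_zero h₀
  · exact ⟨SignType.sign (f t), abs_sign_le_one _, sign_mul_self _,
      ((hasDerivAt_abs h₀).comp t hf).hasDerivWithinAt⟩

theorem dotProduct_mulVec_nonpos {ι : Type*} [Fintype ι] {L : Matrix ι ι ℝ}
    (hL : ∀ i j, i ≠ j → 0 ≤ L i j) (hcol : ∀ j, ∑ i, L i j ≤ 0) {σ x : ι → ℝ}
    (hσ : ∀ i, |σ i| ≤ 1) (hσx : ∀ i, σ i * x i = |x i|) :
    σ ⬝ᵥ (L *ᵥ x) ≤ 0 := by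
  have hterm (i j : ι) : σ i * L i j * x j ≤ L i j * |x j| := by
    rcases eq_or_ne i j with rfl | hij
    · exact (by rw [← hσx]; ring : _ = _).le
    · have hσx' : σ i * x j ≤ |x j| := (le_abs_self _).trans <| by
        rw [abs_mul]; exact mul_le_of_le_one_left (abs_nonneg _) (hσ i)
      calc σ i * L i j * x j = L i j * (σ i * x j) := by ring
        _ ≤ L i j * |x j| := mul_le_mul_of_nonneg_left hσx' (hL i j hij)
  calc σ ⬝ᵥ (L *ᵥ x) = ∑ j, ∑ i, σ i * L i j * x j := by
        rw [dotProduct_mulVec]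
        simp only [vecMul, dotProduct, Finset.sum_mul]
    _ ≤ ∑ j, (∑ i, L i j) * |x j| := by
        simp only [Finset.sum_mul]
        exact Finset.sum_le_sum fun j _ => Finset.sum_le_sum fun i _ => hterm i j
    _ ≤ 0 := Finset.sum_nonpos fun j _ => mul_nonpos_of_nonpos_of_nonneg (hcol j) (abs_nonneg _)

theorem antitone_of_forall_hasDerivWithinAt_Ici_nonpos {f : ℝ → ℝ} (hf : Continuous f)
    (hf' : ∀ t, ∃ d ≤ 0, HasDerivWithinAt f d (Ici t) t) : Antitone f := by
  choose f' hf'₀ hf' using hf'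
  intro a b hab
  exact image_le_of_deriv_right_le_deriv_boundary (B := fun _ => f a) hf.continuousOn
    (fun x _ => hf' x) le_rfl continuousOn_const (fun _ _ => hasDerivWithinAt_const _ _ _)
    (fun x _ => hf'₀ x) ⟨hab, le_rfl⟩

theorem antitone_sum_abs_of_hasDerivAt_mulVec {ι : Type*} [Fintype ι] {w : ℝ → ι → ℝ}
    {L : ℝ → Matrix ι ι ℝ} (hL : ∀ t i j, i ≠ j → 0 ≤ L t i j)
    (hcol : ∀ t j, ∑ i, L t i j ≤ 0)
    (hw : ∀ t i, HasDerivAt (fun s => w s i) ((L t *ᵥ w t) i) t) :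
    Antitone fun t => ∑ i, |w t i| := by
  refine antitone_of_forall_hasDerivWithinAt_Ici_nonpos
    (continuous_finsetSum _ fun i _ => continuous_iff_continuousAt.2 fun t =>
      (hw t i).continuousAt.abs) fun t => ?_
  choose σ hσ hσw hderiv using fun i => (hw t i).exists_hasDerivWithinAt_abs_Ici
  exact ⟨σ ⬝ᵥ (L t *ᵥ w t), dotProduct_mulVec_nonpos (hL t) (hcol t) hσ hσw,
    HasDerivWithinAt.fun_sum fun i _ => hderiv i⟩

/-- Written as a sum of three terms so that coinciding neighbours (`N ≤ 2`) add up. -/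
def hartenMatrix {N : ℕ} (A B : ZMod N → ℝ) : Matrix (ZMod N) (ZMod N) ℝ :=
  of fun i j => (if j = i + 1 then A j else 0) + (if j = i - 1 then B j else 0) -
    (if j = i then A j + B j else 0)

section hartenMatrix

variable {N : ℕ} (A B : ZMod N → ℝ)

theorem hartenMatrix_apply_nonneg (hA : 0 ≤ A) (hB : 0 ≤ B) {i j : ZMod N} (hij : i ≠ j) :
    0 ≤ hartenMatrix A B i j := by
  simp only [hartenMatrix, of_apply, hij.symm, if_false, sub_zero]
  exact add_nonneg (ite_nonneg (hA j) le_rfl) (ite_nonneg (hB j) le_rfl)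

variable [NeZero N]

theorem sum_hartenMatrix_apply (j : ZMod N) : ∑ i, hartenMatrix A B i j = 0 := by
  have hsucc (i : ZMod N) : j = i + 1 ↔ i = j - 1 := by rw [eq_sub_iff_add_eq, eq_comm]
  have hpred (i : ZMod N) : j = i - 1 ↔ i = j + 1 := by rw [eq_sub_iff_add_eq, eq_comm]
  simp only [hartenMatrix, of_apply, hsucc, hpred, Finset.sum_sub_distrib, Finset.sum_add_distrib,
    Finset.sum_ite_eq, Finset.sum_ite_eq', Finset.mem_univ, if_true]
  ring

theorem hartenMatrix_mulVec (x : ZMod N → ℝ) (i : ZMod N) :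
    (hartenMatrix A B *ᵥ x) i =
      A (i + 1) * x (i + 1) + B (i - 1) * x (i - 1) - (A i + B i) * x i := by
  simp [hartenMatrix, mulVec, dotProduct, sub_mul, add_mul, Finset.sum_add_distrib,
    Finset.sum_sub_distrib, ite_mul]

end hartenMatrix

theorem harten_semidiscrete_TVD_general (N : ℕ) [NeZero N]
    (v C D : ℝ → ZMod N → ℝ)
    (hCpos : ∀ (t : ℝ) (j : ZMod N), 0 ≤ C t j)
    (hDpos : ∀ (t : ℝ) (j : ZMod N), 0 ≤ D t j)
    (hode : ∀ (t : ℝ) (j : ZMod N),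
      HasDerivAt (fun s => v s j)
        (C t j * (v t (j + 1) - v t j) - D t (j - 1) * (v t j - v t (j - 1))) t) :
    Antitone (fun t => ∑ j : ZMod N, |v t (j + 1) - v t j|) := by
  refine antitone_sum_abs_of_hasDerivAt_mulVec (w := fun t j => v t (j + 1) - v t j)
    (L := fun t => hartenMatrix (C t) (D t))
    (fun t _ _ => hartenMatrix_apply_nonneg _ _ (hCpos t) (hDpos t))
    (fun t j => (sum_hartenMatrix_apply _ _ j).le) fun t j => ?_
  rw [hartenMatrix_mulVec]
  refine ((hode t (j + 1)).sub (hode t j)).congr_deriv ?_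
  simp only [add_sub_cancel_right, sub_add_cancel]
  ring

/-- Semi-discrete Harten lemma on a periodic grid: if `v` solves the
incremental-form ODE system
`d vⱼ/dt = Cⱼ(t)(v_{j+1} − vⱼ) − D_{j−1}(t)(vⱼ − v_{j−1})`
with continuous nonnegative coefficients `C`, `D`, then the total variation
`TV(v(t)) = Σⱼ |v_{j+1}(t) − vⱼ(t)|` is nonincreasing in `t`. -/
theorem harten_semidiscrete_TVD (N : ℕ) [NeZero N]
    (v C D : ℝ → ZMod N → ℝ)
    (hv : ∀ j : ZMod N, Differentiable ℝ (fun t => v t j))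
    (hCcont : ∀ j : ZMod N, Continuous (fun t => C t j))
    (hDcont : ∀ j : ZMod N, Continuous (fun t => D t j))
    (hCpos : ∀ (t : ℝ) (j : ZMod N), 0 ≤ C t j)
    (hDpos : ∀ (t : ℝ) (j : ZMod N), 0 ≤ D t j)
    (hode : ∀ (t : ℝ) (j : ZMod N),
      HasDerivAt (fun s => v s j)
        (C t j * (v t (j + 1) - v t j) - D t (j - 1) * (v t j - v t (j - 1))) t) :
    Antitone (fun t => ∑ j : ZMod N, |v t (j + 1) - v t j|) :=
  harten_semidiscrete_TVD_general N v C D hCpos hDpos hode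
end

section
/- Fully discrete Harten lemma (periodic grid). Let N ≥ 1 and let v, C, D : ZMod N → ℝ with C_j ≥ 0, D_j ≥ 0 and C_j + D_j ≤ 1 for every j ∈ ZMod N. Define w : ZMod N → ℝ by w_j = v_j + C_j·(v_{j+1} − v_j) − D_{j−1}·(v_j − v_{j−1}). Then Σ_{j ∈ ZMod N} |w_{j+1} − w_j| ≤ Σ_{j ∈ ZMod N} |v_{j+1} − v_j|, i.e. the update does not increase the total variation. -/
/-- Fully discrete Harten lemma on a periodic grid: if `Cⱼ, Dⱼ ≥ 0` and
`Cⱼ + Dⱼ ≤ 1` for all `j`, then the update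
`wⱼ = vⱼ + Cⱼ(v_{j+1} − vⱼ) − D_{j−1}(vⱼ − v_{j−1})`
does not increase the total variation `Σⱼ |v_{j+1} − vⱼ|`. -/
theorem harten_discrete_TVD (N : ℕ) [NeZero N]
    (v C D : ZMod N → ℝ)
    (hC : ∀ j : ZMod N, 0 ≤ C j)
    (hD : ∀ j : ZMod N, 0 ≤ D j)
    (hCD : ∀ j : ZMod N, C j + D j ≤ 1)
    (w : ZMod N → ℝ)
    (hw : ∀ j : ZMod N,
      w j = v j + C j * (v (j + 1) - v j) - D (j - 1) * (v j - v (j - 1))) :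
    ∑ j : ZMod N, |w (j + 1) - w j| ≤ ∑ j : ZMod N, |v (j + 1) - v j| := by
  set Δ : ZMod N → ℝ := fun j => v (j + 1) - v j with hΔ
  have key : ∀ j : ZMod N,
      |w (j + 1) - w j| ≤ (1 - C j - D j) * |Δ j| + C (j + 1) * |Δ (j + 1)|
        + D (j - 1) * |Δ (j - 1)| := by
    intro j
    have hwj : w (j + 1) - w j
        = (1 - C j - D j) * Δ j + C (j + 1) * Δ (j + 1) + D (j - 1) * Δ (j - 1) := by
      rw [hw (j + 1), hw j]
      simp only [hΔ, add_sub_cancel_right]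
      ring
    rw [hwj]
    have h1 : 0 ≤ 1 - C j - D j := by have := hCD j; linarith
    calc |(1 - C j - D j) * Δ j + C (j + 1) * Δ (j + 1) + D (j - 1) * Δ (j - 1)|
        ≤ |(1 - C j - D j) * Δ j + C (j + 1) * Δ (j + 1)| + |D (j - 1) * Δ (j - 1)| :=
          abs_add_le _ _
      _ ≤ |(1 - C j - D j) * Δ j| + |C (j + 1) * Δ (j + 1)| + |D (j - 1) * Δ (j - 1)| := by
          gcongr; exact abs_add_le _ _
      _ = (1 - C j - D j) * |Δ j| + C (j + 1) * |Δ (j + 1)| + D (j - 1) * |Δ (j - 1)| := by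
          rw [abs_mul, abs_mul, abs_mul, abs_of_nonneg h1, abs_of_nonneg (hC _),
            abs_of_nonneg (hD _)]
  calc ∑ j : ZMod N, |w (j + 1) - w j|
      ≤ ∑ j : ZMod N, ((1 - C j - D j) * |Δ j| + C (j + 1) * |Δ (j + 1)|
          + D (j - 1) * |Δ (j - 1)|) := Finset.sum_le_sum fun j _ => key j
    _ = ∑ j : ZMod N, (1 - C j - D j) * |Δ j| + ∑ j : ZMod N, C (j + 1) * |Δ (j + 1)|
          + ∑ j : ZMod N, D (j - 1) * |Δ (j - 1)| := by
        rw [Finset.sum_add_distrib, Finset.sum_add_distrib]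
    _ = ∑ j : ZMod N, (1 - C j - D j) * |Δ j| + ∑ j : ZMod N, C j * |Δ j|
          + ∑ j : ZMod N, D j * |Δ j| := by
        congr 1
        · congr 1
          exact Fintype.sum_equiv (Equiv.addRight (1 : ZMod N)) _ _ (fun j => rfl)
        · exact Fintype.sum_equiv (Equiv.subRight (1 : ZMod N)) _ _ (fun j => rfl)
    _ = ∑ j : ZMod N, |Δ j| := by
        rw [← Finset.sum_add_distrib, ← Finset.sum_add_distrib]
        apply Finset.sum_congr rfl
        intro j _
        ring
end
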